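/- Define T_n(z) = 2 ∑_{i=1}^{⌊(n-1)/2⌋} S_{n-i-2}(z) S_{i-1}(z) z^{n-i-1} + (S_{⌊(n-2)/2⌋}(z))², where S_m(z) = ∏_{i=1}^m (1+z^i). Then for each n ≥ 2, the polynomial D_n(z) = ∏_{j≥1} S_{⌊(n-2)/2^j⌋}(z) divides T_n(z) in ℤ[z]. -/

import Mathlib

open Polynomial

noncomputable def S (n : ℕ) : Polynomial ℤ := ∏ i ∈ Finset.Icc 1 n, (1 + X ^ i)

noncomputable def D (n : ℕ) : Polynomial ℤ := ∏ᶠ j : ℕ, S ((n - 2) / 2 ^ (j + 1))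

noncomputable def T (n : ℕ) : Polynomial ℤ :=
  2 * ∑ i ∈ Finset.Icc 1 ((n - 1) / 2), S (n - i - 2) * S (i - 1) * X ^ (n - i - 1)
    + (S ((n - 2) / 2)) ^ 2

open Finset

/-!
Since `1 + X ^ i = ∏ Φ_{2c}` over the `c ∣ i` with `2c ∤ i`, the cyclotomic polynomial `Φ_{2c}`
occurs in `S a` with multiplicity `⌊a/c⌋ - ⌊a/2c⌋`, and hence, the multiplicities telescoping,
in `D n` with multiplicity `⌊(n-2)/2c⌋`. Every summand of `T n` has a factor `S a * S b` with
`n - 2 ≤ a + b + 1`, and then `⌊(n-2)/2c⌋ ≤ ⌈⌊a/c⌋/2⌉ + ⌈⌊b/c⌋/2⌉`, the multiplicity of `Φ_{2c}`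
in `S a * S b`. So `D n` divides every summand.
-/

lemma Finset.sum_range_tsub_of_antitone {f : ℕ → ℕ} (hf : Antitone f) (n : ℕ) :
    ∑ i ∈ range n, (f i - f (i + 1)) = f 0 - f n := by
  induction n with
  | zero => simp
  | succ n ih =>
    have h₁ : f (n + 1) ≤ f n := hf n.le_succ
    have h₂ : f n ≤ f 0 := hf n.zero_le
    rw [sum_range_succ, ih]
    omega

lemma Nat.dvd_two_mul_and_not_dvd_iff {d i : ℕ} :
    d ∣ 2 * i ∧ ¬ d ∣ i ↔ ∃ c, (c ∣ i ∧ ¬ 2 * c ∣ i) ∧ 2 * c = d := by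
  constructor
  · rintro ⟨hd2i, hdi⟩
    have h2d : 2 ∣ d := by
      by_contra h
      exact hdi (((Nat.prime_two.coprime_iff_not_dvd).2 h).symm.dvd_of_dvd_mul_left hd2i)
    obtain ⟨c, rfl⟩ := h2d
    exact ⟨c, ⟨Nat.dvd_of_mul_dvd_mul_left two_pos hd2i, hdi⟩, rfl⟩
  · rintro ⟨c, ⟨hci, hc⟩, rfl⟩
    exact ⟨mul_dvd_mul_left 2 hci, hc⟩

lemma X_pow_add_one_eq_prod_cyclotomic (R : Type*) [CommRing R] {i : ℕ} (hi : i ≠ 0) :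
    (X ^ i + 1 : R[X]) = ∏ d ∈ (2 * i).divisors \ i.divisors, cyclotomic d R := by
  refine (monic_X_pow_sub_C (1 : R) hi).isRegular.left ?_
  dsimp only
  rw [C_1, X_pow_sub_one_mul_prod_cyclotomic_eq_X_pow_sub_one_of_dvd R (dvd_mul_left i 2)
    (by omega)]
  ring

lemma one_add_X_pow_eq_prod_cyclotomic (R : Type*) [CommRing R] {i N : ℕ} (hi : i ≠ 0)
    (hiN : i ≤ N) :
    (1 + X ^ i : R[X]) =
      ∏ c ∈ Icc 1 N, cyclotomic (2 * c) R ^ (if c ∣ i ∧ ¬ 2 * c ∣ i then 1 else 0) := by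
  have hdiv : (2 * i).divisors \ i.divisors
      = ((Icc 1 N).filter fun c => c ∣ i ∧ ¬ 2 * c ∣ i).image (2 * ·) := by
    ext d
    have h2i : 2 * i ≠ 0 := by omega
    simp only [mem_sdiff, Nat.mem_divisors, mem_image, mem_filter, mem_Icc, ne_eq, hi, h2i,
      not_false_eq_true, and_true]
    rw [Nat.dvd_two_mul_and_not_dvd_iff]
    refine exists_congr fun c => ⟨fun ⟨hc, h2c⟩ => ⟨⟨?_, hc⟩, h2c⟩, fun ⟨⟨_, hc⟩, h2c⟩ => ⟨hc, h2c⟩⟩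
    exact ⟨Nat.pos_of_dvd_of_pos hc.1 (by omega), (Nat.le_of_dvd (by omega) hc.1).trans hiN⟩
  simp only [pow_ite, pow_one, pow_zero, ← prod_filter]
  rw [add_comm, X_pow_add_one_eq_prod_cyclotomic R hi, hdiv, prod_image (by intro a _ b _; simp)]

lemma card_filter_dvd_and_not_dvd (a c : ℕ) :
    #{i ∈ Icc 1 a | c ∣ i ∧ ¬ 2 * c ∣ i} = a / c - a / (2 * c) := by
  rw [filter_and_not,
    card_sdiff_of_subset (monotone_filter_right _ fun _ _ => (dvd_mul_left c 2).trans),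
    ← zero_add 1, Icc_add_one_left_eq_Ioc, Nat.Ioc_filter_dvd_card_eq_div,
    Nat.Ioc_filter_dvd_card_eq_div]

lemma S_eq_prod_cyclotomic {a N : ℕ} (haN : a ≤ N) :
    S a = ∏ c ∈ Icc 1 N, cyclotomic (2 * c) ℤ ^ (a / c - a / (2 * c)) := by
  have hfactor : ∀ i ∈ Icc 1 a, (1 + X ^ i : ℤ[X]) =
      ∏ c ∈ Icc 1 N, cyclotomic (2 * c) ℤ ^ (if c ∣ i ∧ ¬ 2 * c ∣ i then 1 else 0) := by
    intro i hi
    rw [mem_Icc] at hi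
    exact one_add_X_pow_eq_prod_cyclotomic ℤ (by omega) (by omega)
  rw [S, prod_congr rfl hfactor, prod_comm]
  refine prod_congr rfl fun c _ => ?_
  rw [prod_pow_eq_pow_sum, sum_boole, Nat.cast_id, card_filter_dvd_and_not_dvd]

lemma D_eq_prod_range (n : ℕ) : D n = ∏ j ∈ range (n - 2), S ((n - 2) / 2 ^ (j + 1)) := by
  refine finprod_eq_prod_of_mulSupport_subset _ fun j hj => ?_
  by_contra hjm
  have hlt : n - 2 < 2 ^ (j + 1) := calc
    n - 2 ≤ j := by simpa using hjm
    _ < 2 ^ (j + 1) := Nat.lt_two_pow_self.trans (Nat.pow_lt_pow_succ one_lt_two)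
  exact hj (by show S _ = 1; rw [Nat.div_eq_of_lt hlt, S, Icc_eq_empty_of_lt one_pos, prod_empty])

lemma D_eq_prod_cyclotomic {n N : ℕ} (hN : n - 2 ≤ N) :
    D n = ∏ c ∈ Icc 1 N, cyclotomic (2 * c) ℤ ^ ((n - 2) / (2 * c)) := by
  set m := n - 2
  rw [D_eq_prod_range, prod_congr rfl fun j _ =>
    S_eq_prod_cyclotomic ((Nat.div_le_self m (2 ^ (j + 1))).trans hN), prod_comm]
  refine prod_congr rfl fun c hc => ?_
  rw [prod_pow_eq_pow_sum]
  congr 1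
  set g : ℕ → ℕ := fun j => m / 2 ^ (j + 1) / c
  have hg : Antitone g := fun j k hjk =>
    Nat.div_le_div_right (Nat.div_le_div_left (Nat.pow_le_pow_right two_pos (by omega))
      (by positivity))
  have hsucc : ∀ j, m / 2 ^ (j + 1) / (2 * c) = g (j + 1) := fun j => by
    simp only [g, Nat.div_div_eq_div_mul]
    ring_nf
  have hlast : g m = 0 := by
    refine Nat.div_eq_of_lt (Nat.div_lt_of_lt_mul ?_)
    calc m < 2 ^ m := Nat.lt_two_pow_self
      _ ≤ 2 ^ (m + 1) * c := by
        rw [mem_Icc] at hc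
        exact Nat.pow_le_pow_right two_pos m.le_succ |>.trans (Nat.le_mul_of_pos_right _ hc.1)
  simp only [hsucc]
  rw [sum_range_tsub_of_antitone hg, hlast, Nat.sub_zero]
  simp only [g, Nat.div_div_eq_div_mul, zero_add, pow_one]

lemma Nat.div_two_mul_le_of_le_add_add_one {a b m c : ℕ} (hc : 0 < c) (hm : m ≤ a + b + 1) :
    m / (2 * c) ≤ (a / c - a / (2 * c)) + (b / c - b / (2 * c)) := by
  have hmc : m / c ≤ a / c + b / c + 1 := by
    have ha := Nat.lt_mul_div_succ a hc
    have hb := Nat.lt_mul_div_succ b hc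
    rw [← Nat.lt_succ_iff, Nat.div_lt_iff_lt_mul hc]
    nlinarith
  simp only [mul_comm 2 c, ← Nat.div_div_eq_div_mul]
  omega

lemma D_dvd_S_mul_S {n a b : ℕ} (h : n - 2 ≤ a + b + 1) : D n ∣ S a * S b := by
  rw [D_eq_prod_cyclotomic h, S_eq_prod_cyclotomic (N := a + b + 1) (by omega),
    S_eq_prod_cyclotomic (N := a + b + 1) (by omega), ← prod_mul_distrib]
  refine prod_dvd_prod_of_dvd _ _ fun c hc => ?_
  rw [← pow_add]
  exact pow_dvd_pow _ (Nat.div_two_mul_le_of_le_add_add_one (mem_Icc.1 hc).1 h)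

theorem D_dvd_T_general (n : ℕ) : D n ∣ T n := by
  refine dvd_add (dvd_mul_of_dvd_right (dvd_sum fun i hi => ?_) 2) ?_
  · rw [mem_Icc] at hi
    exact dvd_mul_of_dvd_left (D_dvd_S_mul_S (by omega)) _
  · rw [sq]
    exact D_dvd_S_mul_S (by omega)

theorem D_dvd_T (n : ℕ) (hn : 2 ≤ n) : D n ∣ T n :=
  D_dvd_T_general n
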